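/- arXiv:2210.05194 — 2 statements merged into one kernel-verified Lean document; each statement's English description precedes it below -/
import Mathlib

section
/- Let q = 2^m with m ≥ 3. For any two distinct fixed elements x_1, x_2 ∈ F_q^*, the number of unordered pairs {x_3, x_4} of elements making x_1, x_2, x_3, x_4 pairwise distinct nonzero elements of F_q and the 4×4 matrix with rows (1,1,1,1), (x_1^2,...,x_4^2), (x_1^3,...,x_4^3), (x_1^4,...,x_4^4) singular equals (q-4)/2. -/
/-!
The determinant is the Vandermonde product times `e₃(x₁, x₂, x₃, x₄)`, and
`e₃ = x₄ ((x₁ + x₂) x₃ + x₁ x₂) + x₁ x₂ x₃`. So for fixed `x₁, x₂` the singular pairs are exactly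
`{x, σ x}` with `σ x = x₁ x₂ x / ((x₁ + x₂) x + x₁ x₂)`. In characteristic 2 this Möbius map is an
involution whose only fixed point is `0`, it swaps `x₁` and `x₂`, and it has the single pole
`x₁ x₂ / (x₁ + x₂)`. Hence it pairs off the `q - 4` remaining elements into `(q - 4) / 2` pairs.
-/

open Finset

lemma det_powers_eq {R : Type*} [CommRing R] (x₁ x₂ x₃ x₄ : R) :
    Matrix.det !![1, 1, 1, 1;
                  x₁^2, x₂^2, x₃^2, x₄^2;
                  x₁^3, x₂^3, x₃^3, x₄^3;
                  x₁^4, x₂^4, x₃^4, x₄^4] =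
    (x₂ - x₁) * (x₃ - x₁) * (x₄ - x₁) * (x₃ - x₂) * (x₄ - x₂) * (x₄ - x₃) *
      (x₁ * x₂ * x₃ + x₁ * x₂ * x₄ + x₁ * x₃ * x₄ + x₂ * x₃ * x₄) := by
  simp [Matrix.det_succ_row_zero, Fin.sum_univ_succ, Fin.succAbove]
  ring

lemma det_powers_eq_zero_iff {R : Type*} [CommRing R] [IsDomain R] {x₁ x₂ x₃ x₄ : R}
    (h₁₂ : x₁ ≠ x₂) (h₁₃ : x₁ ≠ x₃) (h₁₄ : x₁ ≠ x₄) (h₂₃ : x₂ ≠ x₃) (h₂₄ : x₂ ≠ x₄)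
    (h₃₄ : x₃ ≠ x₄) :
    Matrix.det !![1, 1, 1, 1;
                  x₁^2, x₂^2, x₃^2, x₄^2;
                  x₁^3, x₂^3, x₃^3, x₄^3;
                  x₁^4, x₂^4, x₃^4, x₄^4] = 0 ↔
      x₁ * x₂ * x₃ + x₁ * x₂ * x₄ + x₁ * x₃ * x₄ + x₂ * x₃ * x₄ = 0 := by
  simp [det_powers_eq, sub_eq_zero, h₁₂.symm, h₁₃.symm, h₁₄.symm, h₂₃.symm, h₂₄.symm, h₃₄.symm]

-- The value at the pole is the junk value `0`.
def partner {F : Type*} [Field F] (x₁ x₂ x : F) : F :=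
  x₁ * x₂ * x / ((x₁ + x₂) * x + x₁ * x₂)

lemma partner_ne_self {F : Type*} [Field F] {x₁ x₂ x : F} (ha : x₁ + x₂ ≠ 0) (hx : x ≠ 0) :
    partner x₁ x₂ x ≠ x := by
  by_cases hD : (x₁ + x₂) * x + x₁ * x₂ = 0
  · simpa [partner, hD] using hx.symm
  rw [partner, Ne, div_eq_iff hD]
  intro h
  have : (x₁ + x₂) * x ^ 2 = 0 := by linear_combination -h
  simp_all

def partnerDomain {F : Type*} [Field F] [Fintype F] [DecidableEq F] (x₁ x₂ : F) : Finset F :=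
  {x | x ≠ 0 ∧ x ≠ x₁ ∧ x ≠ x₂ ∧ (x₁ + x₂) * x + x₁ * x₂ ≠ 0}

lemma mem_partnerDomain {F : Type*} [Field F] [Fintype F] [DecidableEq F] {x₁ x₂ x : F} :
    x ∈ partnerDomain x₁ x₂ ↔ x ≠ 0 ∧ x ≠ x₁ ∧ x ≠ x₂ ∧ (x₁ + x₂) * x + x₁ * x₂ ≠ 0 := by
  simp [partnerDomain]

section CharTwo

variable {F : Type*} [Field F] [CharP F 2] {x₁ x₂ x : F}

lemma CharTwo.add_ne_zero_of_ne (h : x₁ ≠ x₂) : x₁ + x₂ ≠ 0 := by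
  rwa [Ne, CharTwo.add_eq_iff_eq_add, zero_add]

lemma esymm_three_eq_zero_iff {x₃ x₄ : F} (hb : x₁ * x₂ ≠ 0) (h₃ : x₃ ≠ 0) :
    x₁ * x₂ * x₃ + x₁ * x₂ * x₄ + x₁ * x₃ * x₄ + x₂ * x₃ * x₄ = 0 ↔
      (x₁ + x₂) * x₃ + x₁ * x₂ ≠ 0 ∧ x₄ = partner x₁ x₂ x₃ := by
  have he : x₁ * x₂ * x₃ + x₁ * x₂ * x₄ + x₁ * x₃ * x₄ + x₂ * x₃ * x₄ =
      x₄ * ((x₁ + x₂) * x₃ + x₁ * x₂) + x₁ * x₂ * x₃ := by ring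
  rw [he, CharTwo.add_eq_iff_eq_add, zero_add, partner]
  by_cases hD : (x₁ + x₂) * x₃ + x₁ * x₂ = 0
  · simp [hD, mul_ne_zero hb h₃, eq_comm]
  · simp [hD, eq_div_iff hD]

lemma partner_denom_ne_zero_iff (ha : x₁ + x₂ ≠ 0) :
    (x₁ + x₂) * x + x₁ * x₂ ≠ 0 ↔ x ≠ x₁ * x₂ / (x₁ + x₂) := by
  rw [Ne, Ne, eq_div_iff ha, mul_comm, CharTwo.add_eq_iff_eq_add, zero_add]

lemma partner_denom_partner (hD : (x₁ + x₂) * x + x₁ * x₂ ≠ 0) :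
    (x₁ + x₂) * partner x₁ x₂ x + x₁ * x₂ = (x₁ * x₂) ^ 2 / ((x₁ + x₂) * x + x₁ * x₂) := by
  rw [partner, eq_div_iff hD]
  field_simp
  linear_combination (x₁ + x₂) * x₁ * x₂ * x * CharTwo.two_eq_zero (R := F)

lemma partner_partner (hb : x₁ * x₂ ≠ 0) (hD : (x₁ + x₂) * x + x₁ * x₂ ≠ 0) :
    partner x₁ x₂ (partner x₁ x₂ x) = x := by
  rw [partner, partner_denom_partner hD, partner,
    div_eq_iff (div_ne_zero (pow_ne_zero 2 hb) hD)]
  field_simp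

lemma partner_denom_left : (x₁ + x₂) * x₁ + x₁ * x₂ = x₁ ^ 2 := by
  linear_combination x₁ * x₂ * CharTwo.two_eq_zero (R := F)

lemma partner_denom_right : (x₁ + x₂) * x₂ + x₁ * x₂ = x₂ ^ 2 := by
  linear_combination x₁ * x₂ * CharTwo.two_eq_zero (R := F)

lemma partner_left (h₁ : x₁ ≠ 0) : partner x₁ x₂ x₁ = x₂ := by
  rw [partner, partner_denom_left]
  field_simp

lemma partner_right (h₂ : x₂ ≠ 0) : partner x₁ x₂ x₂ = x₁ := by
  rw [partner, partner_denom_right]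
  field_simp

variable [Fintype F] [DecidableEq F]

lemma partner_mem_partnerDomain (h₁ : x₁ ≠ 0) (h₂ : x₂ ≠ 0) (hx : x ∈ partnerDomain x₁ x₂) :
    partner x₁ x₂ x ∈ partnerDomain x₁ x₂ := by
  have hb : x₁ * x₂ ≠ 0 := mul_ne_zero h₁ h₂
  obtain ⟨hx₀, hx₁, hx₂, hD⟩ := mem_partnerDomain.mp hx
  refine mem_partnerDomain.mpr ⟨div_ne_zero (mul_ne_zero hb hx₀) hD, ?_, ?_, ?_⟩
  · intro h
    apply hx₂
    rw [← partner_partner hb hD, h, partner_left h₁]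
  · intro h
    apply hx₁
    rw [← partner_partner hb hD, h, partner_right h₂]
  · rw [partner_denom_partner hD]
    exact div_ne_zero (pow_ne_zero 2 hb) hD

lemma card_partnerDomain (h₁ : x₁ ≠ 0) (h₂ : x₂ ≠ 0) (h₁₂ : x₁ ≠ x₂) :
    #(partnerDomain x₁ x₂) = Fintype.card F - 4 := by
  have ha := CharTwo.add_ne_zero_of_ne h₁₂
  have hD (y : F) := partner_denom_ne_zero_iff (x := y) ha
  have hdomain : partnerDomain x₁ x₂ = univ \ {0, x₁, x₂, x₁ * x₂ / (x₁ + x₂)} := by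
    ext y
    simp [mem_partnerDomain, hD]
  have hc₀ : x₁ * x₂ / (x₁ + x₂) ≠ 0 := div_ne_zero (mul_ne_zero h₁ h₂) ha
  have hc₁ : x₁ ≠ x₁ * x₂ / (x₁ + x₂) :=
    (hD x₁).mp (by rw [partner_denom_left]; exact pow_ne_zero 2 h₁)
  have hc₂ : x₂ ≠ x₁ * x₂ / (x₁ + x₂) :=
    (hD x₂).mp (by rw [partner_denom_right]; exact pow_ne_zero 2 h₂)
  rw [hdomain, card_sdiff_of_subset (subset_univ _), card_univ,
    card_insert_of_notMem (by simp [h₁.symm, h₂.symm, hc₀.symm]),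
    card_insert_of_notMem (by simp [h₁₂, hc₁]), card_pair hc₂]

end CharTwo

lemma two_mul_card_image_pair {α : Type*} [DecidableEq α] {s : Finset α} {σ : α → α}
    (hmaps : ∀ x ∈ s, σ x ∈ s) (hinv : ∀ x ∈ s, σ (σ x) = x) (hne : ∀ x ∈ s, σ x ≠ x) :
    2 * #(s.image fun x => ({x, σ x} : Finset α)) = #s := by
  have hfiber : ∀ t ∈ s.image fun x => ({x, σ x} : Finset α),
      #{z ∈ s | ({z, σ z} : Finset α) = t} = 2 := by
    simp only [mem_image, forall_exists_index, and_imp]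
    rintro _ x hx rfl
    rw [← card_pair (hne x hx).symm]
    congr 1
    ext z
    simp only [mem_filter, mem_insert, mem_singleton]
    constructor
    · rintro ⟨-, hz⟩
      simpa [hz] using mem_insert_self z {σ z}
    · rintro (rfl | rfl)
      · exact ⟨hx, rfl⟩
      · exact ⟨hmaps x hx, by rw [hinv x hx, pair_comm]⟩
  rw [card_eq_sum_card_image (fun x => ({x, σ x} : Finset α)) s, sum_congr rfl hfiber,
    sum_const, smul_eq_mul, mul_comm]

lemma setOf_singular_pairs_eq {F : Type*} [Field F] [CharP F 2] [Fintype F] [DecidableEq F]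
    {x₁ x₂ : F} (h₁ : x₁ ≠ 0) (h₂ : x₂ ≠ 0) (h₁₂ : x₁ ≠ x₂) :
    {s : Finset F | ∃ x₃ x₄ : F, s = {x₃, x₄} ∧ x₃ ≠ x₄ ∧
      x₃ ≠ 0 ∧ x₄ ≠ 0 ∧ x₃ ≠ x₁ ∧ x₃ ≠ x₂ ∧ x₄ ≠ x₁ ∧ x₄ ≠ x₂ ∧
      Matrix.det !![1, 1, 1, 1;
                    x₁^2, x₂^2, x₃^2, x₄^2;
                    x₁^3, x₂^3, x₃^3, x₄^3;
                    x₁^4, x₂^4, x₃^4, x₄^4] = 0} =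
      ↑((partnerDomain x₁ x₂).image fun x => ({x, partner x₁ x₂ x} : Finset F)) := by
  have hb : x₁ * x₂ ≠ 0 := mul_ne_zero h₁ h₂
  ext s
  simp only [Set.mem_ofPred_eq, coe_image, Set.mem_image, mem_coe]
  constructor
  · rintro ⟨x₃, x₄, rfl, h₃₄, h₃, -, h₃₁, h₃₂, h₄₁, h₄₂, hdet⟩
    rw [det_powers_eq_zero_iff h₁₂ h₃₁.symm h₄₁.symm h₃₂.symm h₄₂.symm h₃₄,
      esymm_three_eq_zero_iff hb h₃] at hdet
    obtain ⟨hD, rfl⟩ := hdet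
    exact ⟨x₃, mem_partnerDomain.mpr ⟨h₃, h₃₁, h₃₂, hD⟩, rfl⟩
  · rintro ⟨x, hx, rfl⟩
    obtain ⟨hx₀, hx₁, hx₂, hD⟩ := mem_partnerDomain.mp hx
    obtain ⟨hy₀, hy₁, hy₂, -⟩ := mem_partnerDomain.mp (partner_mem_partnerDomain h₁ h₂ hx)
    have hne := partner_ne_self (CharTwo.add_ne_zero_of_ne h₁₂) hx₀
    refine ⟨x, partner x₁ x₂ x, rfl, hne.symm, hx₀, hy₀, hx₁, hx₂, hy₁, hy₂, ?_⟩
    rw [det_powers_eq_zero_iff h₁₂ hx₁.symm hy₁.symm hx₂.symm hy₂.symm hne.symm,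
      esymm_three_eq_zero_iff hb hx₀]
    exact ⟨hD, rfl⟩

theorem stmt13_general (m : ℕ)
    (F : Type*) [Field F] [Fintype F] [DecidableEq F]
    (hF : Fintype.card F = 2 ^ m)
    (x₁ x₂ : F) (h1 : x₁ ≠ 0) (h2 : x₂ ≠ 0) (h12 : x₁ ≠ x₂) :
    {s : Finset F | ∃ x₃ x₄ : F, s = {x₃, x₄} ∧ x₃ ≠ x₄ ∧
      x₃ ≠ 0 ∧ x₄ ≠ 0 ∧ x₃ ≠ x₁ ∧ x₃ ≠ x₂ ∧ x₄ ≠ x₁ ∧ x₄ ≠ x₂ ∧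
      Matrix.det !![1, 1, 1, 1;
                    x₁^2, x₂^2, x₃^2, x₄^2;
                    x₁^3, x₂^3, x₃^3, x₄^3;
                    x₁^4, x₂^4, x₃^4, x₄^4] = 0}.ncard
      = (2 ^ m - 4) / 2 := by
  have : CharP F 2 := charP_of_card_eq_prime_pow hF
  have hcount := two_mul_card_image_pair (fun x hx => partner_mem_partnerDomain h1 h2 hx)
    (fun x hx => partner_partner (mul_ne_zero h1 h2) (mem_partnerDomain.mp hx).2.2.2)
    (fun x hx => partner_ne_self (CharTwo.add_ne_zero_of_ne h12) (mem_partnerDomain.mp hx).1)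
  rw [card_partnerDomain h1 h2 h12, hF] at hcount
  rw [setOf_singular_pairs_eq h1 h2 h12, Set.ncard_coe_finset]
  omega

theorem stmt13 (m : ℕ) (hm : 3 ≤ m)
    (F : Type*) [Field F] [Fintype F] [DecidableEq F]
    (hF : Fintype.card F = 2 ^ m)
    (x₁ x₂ : F) (h1 : x₁ ≠ 0) (h2 : x₂ ≠ 0) (h12 : x₁ ≠ x₂) :
    {s : Finset F | ∃ x₃ x₄ : F, s = {x₃, x₄} ∧ x₃ ≠ x₄ ∧
      x₃ ≠ 0 ∧ x₄ ≠ 0 ∧ x₃ ≠ x₁ ∧ x₃ ≠ x₂ ∧ x₄ ≠ x₁ ∧ x₄ ≠ x₂ ∧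
      Matrix.det !![1, 1, 1, 1;
                    x₁^2, x₂^2, x₃^2, x₄^2;
                    x₁^3, x₂^3, x₃^3, x₄^3;
                    x₁^4, x₂^4, x₃^4, x₄^4] = 0}.ncard
      = (2 ^ m - 4) / 2 :=
  stmt13_general m F hF x₁ x₂ h1 h2 h12
end

section
/- Let q = 2^m with m odd and m > 3. For any two distinct fixed elements x_1, x_2 ∈ F_q^*, the number of unordered triples {x_3, x_4, x_5} such that x_1, ..., x_5 are pairwise distinct nonzero elements of F_q and ∑_{1 ≤ i < j ≤ 4} x_i x_j + (x_1+x_2+x_3+x_4)x_5 = 0 equals (q-5)(q-8)/6. -/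
/-!
In characteristic 2 the left-hand side is `e₂(x₁, …, x₅) = K(x₃, x₄) + (x₁ + x₂ + x₃ + x₄) x₅`.
The coefficient of `x₅` cannot vanish on a solution: then `e₂` becomes `X² + XY + Y²` with
`X = x₁ + x₃`, `Y = x₂ + x₃`, and since `3 ∤ 2^m - 1` for odd `m` there is no primitive cube root
of unity, so `X² + XY + Y² = 0` forces `x₁ = x₂`. Hence an ordered solution is a pair `(x₃, x₄)` of
distinct points outside `{0, x₁, x₂}` with `x₃ + x₄ ≠ x₁ + x₂` — there are `(q - 4)²` of them —
whose fifth point `x₅` avoids `0, x₁, x₂, x₃, x₄`. For each of these five values the pairs hitting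
it form the graph of an explicit function (two hyperbolas and a parabola, using that every element
is a square) over the complement of `8, 4, 4, 4, 4` points respectively. This leaves
`(q - 4)² - (q - 8) - 4 (q - 4) = (q - 5)(q - 8)` ordered solutions, and every unordered one is
counted six times.
-/

open Finset

section Triples

variable {α : Type*} [DecidableEq α]

theorem card_perms_of_triple {x y z : α} (hxy : x ≠ y) (hxz : x ≠ z) (hyz : y ≠ z) :
    ({(x, y, z), (x, z, y), (y, x, z), (y, z, x), (z, x, y), (z, y, x)} :
      Finset (α × α × α)).card = 6 := by
  repeat rw [card_insert_of_notMem (by simp [*, Ne.symm hxy, Ne.symm hxz, Ne.symm hyz])]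
  rfl

theorem mem_perms_of_triple {x y z x' y' z' : α} (hxy : x' ≠ y') (hxz : x' ≠ z') (hyz : y' ≠ z')
    (h : ({x', y', z'} : Finset α) = {x, y, z}) :
    (x', y', z') ∈ ({(x, y, z), (x, z, y), (y, x, z), (y, z, x), (z, x, y), (z, y, x)} :
      Finset (α × α × α)) := by
  have hx : x' ∈ ({x, y, z} : Finset α) := h ▸ by simp
  have hy : y' ∈ ({x, y, z} : Finset α) := h ▸ by simp
  have hz : z' ∈ ({x, y, z} : Finset α) := h ▸ by simp
  simp only [mem_insert, mem_singleton] at hx hy hz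
  rcases hx with rfl | rfl | rfl <;> rcases hy with rfl | rfl | rfl <;>
    rcases hz with rfl | rfl | rfl <;> simp_all

theorem ncard_setOf_triple_mul_six (P : α → α → α → Prop) (T : Finset (α × α × α))
    (hT : ∀ x y z, (x, y, z) ∈ T ↔ P x y z)
    (hne : ∀ x y z, P x y z → x ≠ y ∧ x ≠ z ∧ y ≠ z)
    (hswap₁ : ∀ x y z, P x y z → P y x z) (hswap₂ : ∀ x y z, P x y z → P x z y) :
    {s : Finset α | ∃ x y z, s = {x, y, z} ∧ P x y z}.ncard * 6 = T.card := by
  set f : α × α × α → Finset α := fun t => {t.1, t.2.1, t.2.2}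
  have hset : {s : Finset α | ∃ x y z, s = {x, y, z} ∧ P x y z} = ↑(T.image f) := by
    ext s
    simp [f, hT, and_comm, eq_comm]
  have hfiber : ∀ s ∈ T.image f, (T.filter (f · = s)).card = 6 := by
    simp only [mem_image, Prod.exists]
    rintro s ⟨x, y, z, ht, rfl⟩
    obtain ⟨hxy, hxz, hyz⟩ := hne x y z ((hT x y z).1 ht)
    rw [← card_perms_of_triple hxy hxz hyz]
    congr 1
    ext ⟨x', y', z'⟩
    simp only [mem_filter, hT]
    constructor
    · rintro ⟨hP', hf⟩
      obtain ⟨h₁, h₂, h₃⟩ := hne x' y' z' hP'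
      exact mem_perms_of_triple h₁ h₂ h₃ hf
    · intro h
      simp only [mem_insert, mem_singleton, Prod.mk.injEq] at h
      refine ⟨?_, ?_⟩
      · rcases h with ⟨rfl, rfl, rfl⟩ | ⟨rfl, rfl, rfl⟩ | ⟨rfl, rfl, rfl⟩ | ⟨rfl, rfl, rfl⟩ |
          ⟨rfl, rfl, rfl⟩ | ⟨rfl, rfl, rfl⟩ <;> grind
      · ext
        simp only [f]
        grind
  rw [hset, Set.ncard_coe_finset, card_eq_sum_card_image f T, sum_congr rfl hfiber,
    sum_const, smul_eq_mul]

end Triples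

section Counting

variable {ι α : Type*} [DecidableEq α]

theorem card_eq_card_filter_forall_ne_add_sum {n : ℕ} (s : Finset ι) (g : ι → α)
    (z : ι → Fin n → α) (hz : ∀ p ∈ s, Function.Injective (z p)) :
    s.card = (s.filter fun p => ∀ i, g p ≠ z p i).card +
      ∑ i, (s.filter fun p => g p = z p i).card := by
  simp only [card_filter, card_eq_sum_ones s]
  rw [sum_comm, ← sum_add_distrib]
  refine sum_congr rfl fun p hp => ?_
  by_cases h : ∃ i, g p = z p i
  · obtain ⟨i₀, hi₀⟩ := h
    have hi : ∀ i, g p = z p i ↔ i₀ = i := fun i => hi₀ ▸ (hz p hp).eq_iff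
    have hne : ¬ ∀ i, g p ≠ z p i := fun h => h i₀ hi₀
    simp only [hi, hne, if_false, zero_add, sum_ite_eq, mem_univ, if_true]
  · push Not at h
    simp [h]

theorem card_add_card_eq_card_of_graph [Fintype α] {s : Finset (α × α)} (Y : Finset α)
    (φ : α → α) (h : ∀ x y, (x, y) ∈ s ↔ x ∉ Y ∧ y = φ x) :
    s.card + Y.card = Fintype.card α := by
  rw [← card_compl_add_card Y]
  congr 1
  refine card_nbij' Prod.fst (fun x => (x, φ x)) ?_ ?_ ?_ ?_
  · rintro ⟨x, y⟩ hp
    simpa using ((h x y).1 hp).1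
  · intro x hx
    simpa [h] using hx
  · rintro ⟨x, y⟩ hp
    simp [((h x y).1 hp).2]
  · intro x _
    rfl

end Counting

section NoCubeRootOfUnity

variable {F : Type*} [Field F]

theorem two_pow_mod_three_of_odd {m : ℕ} (hm : Odd m) : 2 ^ m % 3 = 2 := by
  obtain ⟨k, rfl⟩ := hm
  rw [pow_succ, pow_mul, Nat.mul_mod, Nat.pow_mod]
  norm_num

theorem sq_add_self_add_one_ne_zero [Fintype F] (hq : Fintype.card F % 3 = 2) (w : F) :
    w ^ 2 + w + 1 ≠ 0 := by
  intro hw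
  have hw0 : w ≠ 0 := by rintro rfl; simp at hw
  have hw1 : w ≠ 1 := by
    rintro rfl
    have hcard := FiniteField.cast_card_eq_zero F
    rw [← Nat.div_add_mod (Fintype.card F) 3, hq] at hcard
    push_cast at hcard
    exact one_ne_zero (α := F)
      (by linear_combination ((Fintype.card F / 3 : ℕ) + 1 : F) * hw - hcard)
  have horder : orderOf w = 3 := orderOf_eq_prime (by linear_combination (w - 1) * hw) hw1
  have hdvd : 3 ∣ Fintype.card F - 1 :=
    horder ▸ orderOf_dvd_of_pow_eq_one (FiniteField.pow_card_sub_one_eq_one w hw0)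
  omega

theorem sq_add_mul_add_sq_eq_zero_iff (hω : ∀ w : F, w ^ 2 + w + 1 ≠ 0) {x y : F} :
    x ^ 2 + x * y + y ^ 2 = 0 ↔ x = 0 ∧ y = 0 := by
  refine ⟨fun h => ?_, fun ⟨hx, hy⟩ => by simp [hx, hy]⟩
  have hy : y = 0 := by
    by_contra hy
    apply hω (x / y)
    field_simp
    linear_combination h
  subst hy
  simpa using h

end NoCubeRootOfUnity

section FivePoints

variable {F : Type*} [Field F]

def esymm2 (a b u v w : F) : F :=
  a * b + a * u + a * v + b * u + b * v + u * v + (a + b + u + v) * w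

def fifthPoint (a b u v : F) : F :=
  -(a * b + (a + b) * (u + v) + u * v) / (a + b + u + v)

def IsSolution (a b u v w : F) : Prop :=
  u ≠ v ∧ u ≠ w ∧ v ≠ w ∧ u ≠ 0 ∧ v ≠ 0 ∧ w ≠ 0 ∧
    u ≠ a ∧ u ≠ b ∧ v ≠ a ∧ v ≠ b ∧ w ≠ a ∧ w ≠ b ∧ esymm2 a b u v w = 0

theorem esymm2_swap (a b u v w : F) : esymm2 a b v u w = esymm2 a b u v w := by
  unfold esymm2; ring

theorem esymm2_eq_zero_iff {a b u v w : F} (hL : a + b + u + v ≠ 0) :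
    esymm2 a b u v w = 0 ↔ w = fifthPoint a b u v := by
  rw [fifthPoint, eq_div_iff hL, esymm2]
  constructor <;> intro h <;> linear_combination h

theorem fifthPoint_comm (a b u v : F) : fifthPoint b a u v = fifthPoint a b u v := by
  unfold fifthPoint; ring_nf

theorem fifthPoint_swap (a b u v : F) : fifthPoint a b v u = fifthPoint a b u v := by
  unfold fifthPoint; ring_nf

theorem IsSolution.swap_left {a b u v w : F} (h : IsSolution a b u v w) :
    IsSolution a b v u w := by
  obtain ⟨h₁, h₂, h₃, h₄, h₅, h₆, h₇, h₈, h₉, h₁₀, h₁₁, h₁₂, h⟩ := h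
  exact ⟨h₁.symm, h₃, h₂, h₅, h₄, h₆, h₉, h₁₀, h₇, h₈, h₁₁, h₁₂, (esymm2_swap a b u v w).trans h⟩

theorem IsSolution.swap_right {a b u v w : F} (h : IsSolution a b u v w) :
    IsSolution a b u w v := by
  obtain ⟨h₁, h₂, h₃, h₄, h₅, h₆, h₇, h₈, h₉, h₁₀, h₁₁, h₁₂, h⟩ := h
  exact ⟨h₂, h₁, h₃.symm, h₄, h₆, h₅, h₇, h₈, h₁₁, h₁₂, h₉, h₁₀, by
    rw [← h, esymm2, esymm2]; ring⟩

variable [DecidableEq F]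

instance (a b u v w : F) : Decidable (IsSolution a b u v w) := by
  unfold IsSolution; infer_instance

variable [Fintype F]

def admissiblePairs (a b : F) : Finset (F × F) :=
  ({0, a, b}ᶜ : Finset F).offDiag.filter fun p => a + b + p.1 + p.2 ≠ 0

def forbidden (a b : F) (p : F × F) : Fin 5 → F := ![0, a, b, p.1, p.2]

theorem admissiblePairs_comm (a b : F) : admissiblePairs b a = admissiblePairs a b := by
  ext p
  simp only [admissiblePairs, mem_filter, mem_offDiag, mem_compl, mem_insert, mem_singleton]
  grind

theorem swap_mem_admissiblePairs {a b : F} {p : F × F} :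
    p.swap ∈ admissiblePairs a b ↔ p ∈ admissiblePairs a b := by
  simp only [admissiblePairs, mem_filter, mem_offDiag, Prod.fst_swap, Prod.snd_swap]
  grind

end FivePoints

section CharTwo

variable {F : Type*} [Field F] [CharP F 2] {a b : F}

theorem exists_sq_eq [Finite F] (c : F) : ∃ e : F, e ^ 2 = c := by
  obtain ⟨e, he⟩ := FiniteField.isSquare_of_char_two (ringChar.eq F 2) c
  exact ⟨e, by rw [he, sq]⟩

theorem add_add_add_ne_zero_of_esymm2_eq_zero (hω : ∀ w : F, w ^ 2 + w + 1 ≠ 0) (hab : a ≠ b)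
    {u v w : F} (h : esymm2 a b u v w = 0) : a + b + u + v ≠ 0 := by
  intro hL
  have hD : (a + u) ^ 2 + (a + u) * (b + u) + (b + u) ^ 2 = 0 := by
    have hv : v = a + b + u := by grind
    subst hv
    unfold esymm2 at h
    grind
  rw [sq_add_mul_add_sq_eq_zero_iff hω] at hD
  grind

theorem esymm2_zero_eq_zero_iff {u v : F} :
    esymm2 a b u v 0 = 0 ↔ (u + a + b) * (v + a + b) = a ^ 2 + a * b + b ^ 2 := by
  unfold esymm2; grind

theorem esymm2_left_eq_zero_iff {u v : F} :
    esymm2 a b u v a = 0 ↔ (u + b) * (v + b) = (a + b) ^ 2 := by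
  unfold esymm2; grind

theorem esymm2_fst_eq_zero_iff {u v : F} :
    esymm2 a b u v u = 0 ↔ (a + b) * v = u ^ 2 + a * b := by
  unfold esymm2; grind

variable [Fintype F] [DecidableEq F]

theorem mem_filter_fifthPoint_eq_iff (hω : ∀ w : F, w ^ 2 + w + 1 ≠ 0) (hab : a ≠ b)
    (z : F × F → F) (u v : F) :
    (u, v) ∈ (admissiblePairs a b).filter (fun p => fifthPoint a b p.1 p.2 = z p) ↔
      (u ∉ ({0, a, b} : Finset F) ∧ v ∉ ({0, a, b} : Finset F) ∧ u ≠ v) ∧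
        esymm2 a b u v (z (u, v)) = 0 := by
  simp only [admissiblePairs, mem_filter, mem_offDiag, mem_compl]
  constructor
  · rintro ⟨⟨huv, hL⟩, hz⟩
    exact ⟨huv, (esymm2_eq_zero_iff hL).2 hz.symm⟩
  · rintro ⟨huv, h⟩
    have hL := add_add_add_ne_zero_of_esymm2_eq_zero hω hab h
    exact ⟨⟨huv, hL⟩, ((esymm2_eq_zero_iff hL).1 h).symm⟩

theorem card_admissiblePairs (ha : a ≠ 0) (hb : b ≠ 0) (hab : a ≠ b) :
    (admissiblePairs a b).card = (Fintype.card F - 4) ^ 2 := by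
  have hU : ({0, a, b}ᶜ : Finset F).card = Fintype.card F - 3 := by
    rw [card_compl, card_insert_of_notMem (by simp [ha.symm, hb.symm]), card_pair hab]
  have hY : ({0, a, b, a + b} : Finset F).card = 4 := by
    repeat rw [card_insert_of_notMem (by
      simp only [mem_insert, mem_singleton, not_or]; and_intros <;> grind)]
    rfl
  have hq : 4 ≤ Fintype.card F := hY ▸ card_le_univ _
  have hsplit := card_filter_add_card_filter_not (s := ({0, a, b}ᶜ : Finset F).offDiag)
    fun p => a + b + p.1 + p.2 ≠ 0
  have hgraph := card_add_card_eq_card_of_graph {0, a, b, a + b} (· + (a + b))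
    (s := ({0, a, b}ᶜ : Finset F).offDiag.filter fun p => ¬a + b + p.1 + p.2 ≠ 0)
    fun u v => by
      simp only [mem_filter, mem_offDiag, mem_compl, mem_insert, mem_singleton, not_or]
      grind
  rw [offDiag_card, hU] at hsplit
  rw [hY] at hgraph
  rw [admissiblePairs]
  obtain ⟨r, hr⟩ : ∃ r, Fintype.card F = r + 4 := ⟨_, (Nat.sub_add_cancel hq).symm⟩
  rw [hr] at hsplit hgraph ⊢
  rw [show r + 4 - 3 = r + 1 by omega, show (r + 1) * (r + 1) - (r + 1) = r ^ 2 + r by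
    rw [Nat.sub_eq_of_eq_add]; ring] at hsplit
  rw [Nat.add_sub_cancel]
  linarith

/-- With `s = a + b`, `c = a² + ab + b²` and `e² = c`, the pairs with fifth point `0` lie on the
hyperbola `(u + s)(v + s) = c`; writing `u = s + X`, the conditions on `u` and `v` exclude
`X = 0, s, b, a, c/s, c/b, c/a, e`. -/
theorem card_filter_fifthPoint_eq_zero (hω : ∀ w : F, w ^ 2 + w + 1 ≠ 0) (ha : a ≠ 0)
    (hb : b ≠ 0) (hab : a ≠ b) :
    ((admissiblePairs a b).filter fun p => fifthPoint a b p.1 p.2 = 0).card + 8 =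
      Fintype.card F := by
  obtain ⟨e, he⟩ := exists_sq_eq (a ^ 2 + a * b + b ^ 2)
  have hs : a + b ≠ 0 := by grind
  have hc : a ^ 2 + a * b + b ^ 2 ≠ 0 := fun h => hb ((sq_add_mul_add_sq_eq_zero_iff hω).1 h).2
  have hY : ({0, a, b, a + b, a + b + (a ^ 2 + a * b + b ^ 2) / (a + b),
      a + b + (a ^ 2 + a * b + b ^ 2) / b, a + b + (a ^ 2 + a * b + b ^ 2) / a, a + b + e} :
      Finset F).card = 8 := by
    repeat rw [card_insert_of_notMem (by
      simp only [mem_insert, mem_singleton, not_or]; and_intros <;> grind)]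
    rfl
  rw [← hY]
  refine card_add_card_eq_card_of_graph _
    (fun u => a + b + (a ^ 2 + a * b + b ^ 2) / (u + a + b)) fun u v => ?_
  rw [mem_filter_fifthPoint_eq_iff hω hab, esymm2_zero_eq_zero_iff]
  simp only [mem_insert, mem_singleton, not_or]
  constructor
  · rintro ⟨⟨hu, hv, huv⟩, h⟩
    have hX : u + a + b ≠ 0 := by grind
    refine ⟨?_, by field_simp; grind⟩
    and_intros <;> grind
  · rintro ⟨hu, rfl⟩
    have hX : u + a + b ≠ 0 := by grind
    have h : (u + a + b) * (a + b + (a ^ 2 + a * b + b ^ 2) / (u + a + b) + a + b) =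
        a ^ 2 + a * b + b ^ 2 := by
      field_simp; grind
    generalize a + b + (a ^ 2 + a * b + b ^ 2) / (u + a + b) = v at h ⊢
    and_intros <;> grind [CharTwo.sq_inj]

theorem card_filter_fifthPoint_eq_left (hω : ∀ w : F, w ^ 2 + w + 1 ≠ 0) (ha : a ≠ 0)
    (hb : b ≠ 0) (hab : a ≠ b) :
    ((admissiblePairs a b).filter fun p => fifthPoint a b p.1 p.2 = a).card + 4 =
      Fintype.card F := by
  have hs : a + b ≠ 0 := by grind
  have hY : ({0, a, b, b + (a + b) ^ 2 / b} : Finset F).card = 4 := by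
    repeat rw [card_insert_of_notMem (by
      simp only [mem_insert, mem_singleton, not_or]; and_intros <;> grind)]
    rfl
  rw [← hY]
  refine card_add_card_eq_card_of_graph _ (fun u => b + (a + b) ^ 2 / (u + b)) fun u v => ?_
  rw [mem_filter_fifthPoint_eq_iff hω hab, esymm2_left_eq_zero_iff]
  simp only [mem_insert, mem_singleton, not_or]
  constructor
  · rintro ⟨⟨hu, hv, huv⟩, h⟩
    have hX : u + b ≠ 0 := by grind
    refine ⟨?_, by field_simp; grind⟩
    and_intros <;> grind
  · rintro ⟨hu, rfl⟩
    have hX : u + b ≠ 0 := by grind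
    have h : (u + b) * (b + (a + b) ^ 2 / (u + b) + b) = (a + b) ^ 2 := by
      field_simp; grind
    generalize b + (a + b) ^ 2 / (u + b) = v at h ⊢
    and_intros <;> grind [CharTwo.sq_inj]

theorem card_filter_fifthPoint_eq_right (hω : ∀ w : F, w ^ 2 + w + 1 ≠ 0) (ha : a ≠ 0)
    (hb : b ≠ 0) (hab : a ≠ b) :
    ((admissiblePairs a b).filter fun p => fifthPoint a b p.1 p.2 = b).card + 4 =
      Fintype.card F := by
  simpa only [admissiblePairs_comm, fifthPoint_comm] using
    card_filter_fifthPoint_eq_left hω hb ha hab.symm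

theorem card_filter_fifthPoint_eq_fst (hω : ∀ w : F, w ^ 2 + w + 1 ≠ 0) (ha : a ≠ 0)
    (hb : b ≠ 0) (hab : a ≠ b) :
    ((admissiblePairs a b).filter fun p => fifthPoint a b p.1 p.2 = p.1).card + 4 =
      Fintype.card F := by
  obtain ⟨e, he⟩ := exists_sq_eq (a * b)
  have hs : a + b ≠ 0 := by grind
  have hY : ({0, a, b, e} : Finset F).card = 4 := by
    repeat rw [card_insert_of_notMem (by
      simp only [mem_insert, mem_singleton, not_or]; and_intros <;> grind [CharTwo.sq_inj])]
    rfl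
  rw [← hY]
  refine card_add_card_eq_card_of_graph _ (fun u => (u ^ 2 + a * b) / (a + b)) fun u v => ?_
  rw [mem_filter_fifthPoint_eq_iff hω hab, esymm2_fst_eq_zero_iff]
  simp only [mem_insert, mem_singleton, not_or]
  constructor
  · rintro ⟨⟨hu, hv, huv⟩, h⟩
    refine ⟨?_, by field_simp; grind⟩
    and_intros <;> grind
  · rintro ⟨hu, rfl⟩
    have h : (a + b) * ((u ^ 2 + a * b) / (a + b)) = u ^ 2 + a * b := by field_simp
    generalize (u ^ 2 + a * b) / (a + b) = v at h ⊢
    and_intros <;> grind [CharTwo.sq_inj]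

theorem card_filter_fifthPoint_eq_snd (hω : ∀ w : F, w ^ 2 + w + 1 ≠ 0) (ha : a ≠ 0)
    (hb : b ≠ 0) (hab : a ≠ b) :
    ((admissiblePairs a b).filter fun p => fifthPoint a b p.1 p.2 = p.2).card + 4 =
      Fintype.card F := by
  rw [← card_filter_fifthPoint_eq_fst hω ha hb hab]
  congr 1
  refine card_nbij' Prod.swap Prod.swap ?_ ?_ (fun _ _ => rfl) (fun _ _ => rfl) <;>
  · intro p hp
    simp only [coe_filter, Set.mem_ofPred_eq, swap_mem_admissiblePairs, Prod.fst_swap,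
      Prod.snd_swap, fifthPoint_swap] at hp ⊢
    exact hp

theorem isSolution_iff (hω : ∀ w : F, w ^ 2 + w + 1 ≠ 0) (hab : a ≠ b) {u v w : F} :
    IsSolution a b u v w ↔ (u, v) ∈ admissiblePairs a b ∧ w = fifthPoint a b u v ∧
      ∀ i, w ≠ forbidden a b (u, v) i := by
  simp only [forbidden, Fin.forall_fin_succ, Fin.isValue, Matrix.cons_val_zero,
    Matrix.cons_val_succ, IsEmpty.forall_iff, and_true]
  simp only [IsSolution, admissiblePairs, mem_filter, mem_offDiag, mem_compl, mem_insert,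
    mem_singleton, not_or]
  constructor
  · rintro ⟨huv, huw, hvw, hu0, hv0, hw0, hua, hub, hva, hvb, hwa, hwb, h⟩
    have hL := add_add_add_ne_zero_of_esymm2_eq_zero hω hab h
    exact ⟨⟨⟨⟨hu0, hua, hub⟩, ⟨hv0, hva, hvb⟩, huv⟩, hL⟩, (esymm2_eq_zero_iff hL).1 h,
      hw0, hwa, hwb, huw.symm, hvw.symm⟩
  · rintro ⟨⟨⟨⟨hu0, hua, hub⟩, ⟨hv0, hva, hvb⟩, huv⟩, hL⟩, hw, hw0, hwa, hwb, hwu, hwv⟩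
    exact ⟨huv, Ne.symm hwu, Ne.symm hwv, hu0, hv0, hw0, hua, hub, hva, hvb, hwa, hwb,
      (esymm2_eq_zero_iff hL).2 hw⟩

theorem card_solutions_eq_card_filter (hω : ∀ w : F, w ^ 2 + w + 1 ≠ 0) (hab : a ≠ b) :
    (univ.filter fun t : F × F × F => IsSolution a b t.1 t.2.1 t.2.2).card =
      ((admissiblePairs a b).filter fun p =>
        ∀ i, fifthPoint a b p.1 p.2 ≠ forbidden a b p i).card := by
  refine card_nbij' (fun t => (t.1, t.2.1)) (fun p => (p.1, p.2, fifthPoint a b p.1 p.2))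
    ?_ ?_ ?_ ?_
  · rintro ⟨u, v, w⟩ ht
    obtain ⟨hp, rfl, hw⟩ := (isSolution_iff hω hab).1 (by simpa using ht)
    simpa using ⟨hp, hw⟩
  · rintro ⟨u, v⟩ hp
    simpa [isSolution_iff hω hab] using hp
  · rintro ⟨u, v, w⟩ ht
    obtain ⟨-, rfl, -⟩ := (isSolution_iff hω hab).1 (by simpa using ht)
    rfl
  · intro p _
    rfl

theorem card_solutions (hω : ∀ w : F, w ^ 2 + w + 1 ≠ 0) (ha : a ≠ 0) (hb : b ≠ 0)
    (hab : a ≠ b) :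
    (univ.filter fun t : F × F × F => IsSolution a b t.1 t.2.1 t.2.2).card =
      (Fintype.card F - 5) * (Fintype.card F - 8) := by
  have hsplit := card_eq_card_filter_forall_ne_add_sum (admissiblePairs a b)
    (fun p => fifthPoint a b p.1 p.2) (forbidden a b) fun p hp => by
      simp only [admissiblePairs, mem_filter, mem_offDiag, mem_compl, mem_insert,
        mem_singleton, not_or] at hp
      intro i j
      fin_cases i <;> fin_cases j <;> simp [forbidden] <;> grind
  rw [Fin.sum_univ_five, card_admissiblePairs ha hb hab,
    ← card_solutions_eq_card_filter hω hab] at hsplit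
  change _ = _ + (#((admissiblePairs a b).filter fun p => fifthPoint a b p.1 p.2 = 0) +
    #((admissiblePairs a b).filter fun p => fifthPoint a b p.1 p.2 = a) +
    #((admissiblePairs a b).filter fun p => fifthPoint a b p.1 p.2 = b) +
    #((admissiblePairs a b).filter fun p => fifthPoint a b p.1 p.2 = p.1) +
    #((admissiblePairs a b).filter fun p => fifthPoint a b p.1 p.2 = p.2)) at hsplit
  have h₀ := card_filter_fifthPoint_eq_zero hω ha hb hab
  have h₁ := card_filter_fifthPoint_eq_left hω ha hb hab
  have h₂ := card_filter_fifthPoint_eq_right hω ha hb hab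
  have h₃ := card_filter_fifthPoint_eq_fst hω ha hb hab
  have h₄ := card_filter_fifthPoint_eq_snd hω ha hb hab
  generalize Fintype.card F = q at *
  subst h₀
  simp only [Nat.add_sub_cancel, show ∀ n : ℕ, n + 8 - 4 = n + 4 from fun _ => rfl,
    show ∀ n : ℕ, n + 8 - 5 = n + 3 from fun _ => rfl] at *
  linarith

end CharTwo

theorem stmt16_general (m : ℕ) (hmo : Odd m)
    (F : Type*) [Field F] [Fintype F] [DecidableEq F]
    (hF : Fintype.card F = 2 ^ m)
    (x₁ x₂ : F) (h1 : x₁ ≠ 0) (h2 : x₂ ≠ 0) (h12 : x₁ ≠ x₂) :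
    {s : Finset F | ∃ x₃ x₄ x₅ : F, s = {x₃, x₄, x₅} ∧
      x₃ ≠ x₄ ∧ x₃ ≠ x₅ ∧ x₄ ≠ x₅ ∧
      x₃ ≠ 0 ∧ x₄ ≠ 0 ∧ x₅ ≠ 0 ∧
      x₃ ≠ x₁ ∧ x₃ ≠ x₂ ∧ x₄ ≠ x₁ ∧ x₄ ≠ x₂ ∧ x₅ ≠ x₁ ∧ x₅ ≠ x₂ ∧
      x₁ * x₂ + x₁ * x₃ + x₁ * x₄ + x₂ * x₃ + x₂ * x₄ + x₃ * x₄ +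
        (x₁ + x₂ + x₃ + x₄) * x₅ = 0}.ncard
      = (2 ^ m - 5) * (2 ^ m - 8) / 6 := by
  have : CharP F 2 := charP_of_card_eq_prime_pow hF
  have hω := sq_add_self_add_one_ne_zero (hF ▸ two_pow_mod_three_of_odd hmo)
  have h6 := ncard_setOf_triple_mul_six (IsSolution x₁ x₂)
    (univ.filter fun t => IsSolution x₁ x₂ t.1 t.2.1 t.2.2) (fun _ _ _ => by simp)
    (fun _ _ _ h => ⟨h.1, h.2.1, h.2.2.1⟩) (fun _ _ _ h => h.swap_left)
    (fun _ _ _ h => h.swap_right)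
  rw [card_solutions hω h1 h2 h12, hF] at h6
  exact (Nat.div_eq_of_eq_mul_left (by norm_num) h6.symm).symm

theorem stmt16 (m : ℕ) (hm : 3 < m) (hmo : Odd m)
    (F : Type*) [Field F] [Fintype F] [DecidableEq F]
    (hF : Fintype.card F = 2 ^ m)
    (x₁ x₂ : F) (h1 : x₁ ≠ 0) (h2 : x₂ ≠ 0) (h12 : x₁ ≠ x₂) :
    {s : Finset F | ∃ x₃ x₄ x₅ : F, s = {x₃, x₄, x₅} ∧
      x₃ ≠ x₄ ∧ x₃ ≠ x₅ ∧ x₄ ≠ x₅ ∧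
      x₃ ≠ 0 ∧ x₄ ≠ 0 ∧ x₅ ≠ 0 ∧
      x₃ ≠ x₁ ∧ x₃ ≠ x₂ ∧ x₄ ≠ x₁ ∧ x₄ ≠ x₂ ∧ x₅ ≠ x₁ ∧ x₅ ≠ x₂ ∧
      x₁ * x₂ + x₁ * x₃ + x₁ * x₄ + x₂ * x₃ + x₂ * x₄ + x₃ * x₄ +
        (x₁ + x₂ + x₃ + x₄) * x₅ = 0}.ncard
      = (2 ^ m - 5) * (2 ^ m - 8) / 6 :=
  stmt16_general m hmo F hF x₁ x₂ h1 h2 h12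
end
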